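/- arXiv:2512.08159 — 2 statements merged into one kernel-verified Lean document; each statement's English description precedes it below -/
import Mathlib

section
/- For a continuous map f : X → ℝ and an open set U ⊆ ℝ, the image of f⁻¹(U) under the Reeb quotient map q_f equals f̃⁻¹(U), and the restriction of q_f to f⁻¹(U) is a quotient map onto this set; moreover the Reeb equivalence relation of f restricted to f⁻¹(U) agrees with the Reeb equivalence relation of f|_{f⁻¹(U)}. -/
/-!
Since `f = f̃ ∘ q_f`, the set `f⁻¹(U) = q_f⁻¹(f̃⁻¹(U))` is open and saturated, and a quotient
map restricts to a quotient map over an open subset of its target. A level set of `f` through a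
point of `f⁻¹(U)` lies inside `f⁻¹(U)`, and embeddings carry connected components of a set onto
those of its image, so the two Reeb relations agree.
-/

open Set

variable {X Y : Type*} [TopologicalSpace X] [TopologicalSpace Y]

/-- The Reeb relation of `f : X → ℝ`: `x ∼_f y` iff `y` lies in the connected
component of `x` inside the level set `f ⁻¹' {f x}`. -/
def ReebRel (f : X → ℝ) (x y : X) : Prop :=
  y ∈ connectedComponentIn (f ⁻¹' {f x}) x

namespace Topology.IsEmbedding

variable {g : X → Y}

theorem image_connectedComponentIn (hg : IsEmbedding g) (s : Set X) (x : X) :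
    g '' connectedComponentIn s x = connectedComponentIn (g '' s) (g x) := by
  by_cases hx : x ∈ s
  swap
  · have hgx : g x ∉ g '' s := by rwa [hg.injective.mem_set_image]
    rw [connectedComponentIn_eq_empty hx, connectedComponentIn_eq_empty hgx, image_empty]
  refine (hg.continuous.continuousOn.image_connectedComponentIn_subset hx).antisymm ?_
  set C := connectedComponentIn (g '' s) (g x)
  have hC : g '' (g ⁻¹' C) = C :=
    image_preimage_eq_of_subset ((connectedComponentIn_subset _ _).trans (image_subset_range g s))
  have hpre : IsPreconnected (g ⁻¹' C) := by
    rw [← hg.isInducing.isPreconnected_image, hC]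
    exact isPreconnected_connectedComponentIn
  have hsub : g ⁻¹' C ⊆ connectedComponentIn s x := by
    refine hpre.subset_connectedComponentIn (mem_connectedComponentIn (mem_image_of_mem g hx)) ?_
    rw [← preimage_image_eq s hg.injective]
    exact preimage_mono (connectedComponentIn_subset _ _)
  exact hC ▸ image_mono hsub

theorem mem_connectedComponentIn_iff (hg : IsEmbedding g) {s : Set X} {x y : X} :
    y ∈ connectedComponentIn s x ↔ g y ∈ connectedComponentIn (g '' s) (g x) := by
  rw [← hg.image_connectedComponentIn, hg.injective.mem_set_image]

end Topology.IsEmbedding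

theorem reebRel_restrict_preimage_iff (f : X → ℝ) (V : Set ℝ) (x y : f ⁻¹' V) :
    ReebRel (fun z : f ⁻¹' V => f z.1) x y ↔ ReebRel f x.1 y.1 := by
  have hlevel : ((↑) : f ⁻¹' V → X) '' ((↑) ⁻¹' (f ⁻¹' {f x.1})) = f ⁻¹' {f x.1} := by
    rw [Subtype.image_preimage_coe, inter_eq_right]
    intro z hz
    rw [mem_preimage, mem_singleton_iff.mp hz]
    exact x.2
  unfold ReebRel
  rw [Topology.IsEmbedding.subtypeVal.mem_connectedComponentIn_iff]
  exact hlevel ▸ Iff.rfl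

theorem stmt4 (f : X → ℝ) (hf : Continuous f)
    (ft : Quot (ReebRel f) → ℝ) (hft : ft ∘ Quot.mk (ReebRel f) = f)
    (U : Set ℝ) (hU : IsOpen U) :
    Quot.mk (ReebRel f) '' (f ⁻¹' U) = ft ⁻¹' U ∧
    Topology.IsQuotientMap ((ft ⁻¹' U).restrictPreimage (Quot.mk (ReebRel f))) ∧
    ∀ x y : f ⁻¹' U,
      ReebRel (fun z : f ⁻¹' U => f z.1) x y ↔ ReebRel f x.1 y.1 := by
  have hq : Topology.IsQuotientMap (Quot.mk (ReebRel f)) := isQuotientMap_quot_mk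
  have hft_cont : Continuous ft := hq.continuous_iff.mpr (hft.symm ▸ hf)
  refine ⟨?_, hq.restrictPreimage_isOpen (hU.preimage hft_cont), reebRel_restrict_preimage_iff f U⟩
  rw [← image_preimage_eq (ft ⁻¹' U) hq.surjective, ← preimage_comp, hft]
end

section
/- If K is a closed connected subset of the Reeb graph X/∼_f, then the preimage q_f⁻¹(K) is connected in X. -/
/-! The fibres of `q_f` are connected components of level sets, hence connected. For a quotient
map with connected fibres, a separation of the preimage of `K` by closed sets is saturated (each
fibre lies on one side), so it descends to a separation of the closed set `K`. -/

open Set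

variable {X Y : Type*} [TopologicalSpace X] [TopologicalSpace Y]

theorem ReebRel.connectedComponentIn_eq {f : X → ℝ} {x y : X} (h : ReebRel f x y) :
    connectedComponentIn (f ⁻¹' {f y}) y = connectedComponentIn (f ⁻¹' {f x}) x := by
  have hfy : f y = f x := connectedComponentIn_subset (f ⁻¹' {f x}) x h
  rw [hfy, _root_.connectedComponentIn_eq h]

theorem reebRel_equivalence (f : X → ℝ) : Equivalence (ReebRel f) where
  refl _ := mem_connectedComponentIn rfl
  symm h := by
    rw [ReebRel, h.connectedComponentIn_eq]
    exact mem_connectedComponentIn rfl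
  trans hxy hyz := by rwa [ReebRel, hxy.connectedComponentIn_eq] at hyz

theorem preimage_quot_mk_reebRel_singleton (f : X → ℝ) (x : X) :
    Quot.mk (ReebRel f) ⁻¹' {Quot.mk (ReebRel f) x} = connectedComponentIn (f ⁻¹' {f x}) x := by
  ext y
  rw [mem_preimage, mem_singleton_iff, Quot.eq, (reebRel_equivalence f).eqvGen_iff]
  exact ⟨(reebRel_equivalence f).symm, (reebRel_equivalence f).symm⟩

theorem isConnected_preimage_quot_mk_reebRel_singleton (f : X → ℝ) (t : Quot (ReebRel f)) :
    IsConnected (Quot.mk (ReebRel f) ⁻¹' {t}) := by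
  induction t using Quot.ind with
  | mk x =>
    rw [preimage_quot_mk_reebRel_singleton]
    exact isConnected_connectedComponentIn_iff.mpr rfl

theorem stmt6_general (f : X → ℝ)
    (K : Set (Quot (ReebRel f))) (hKcl : IsClosed K) (hKconn : IsConnected K) :
    IsConnected (Quot.mk (ReebRel f) ⁻¹' K) :=
  isQuotientMap_quot_mk.isCoinducing.isConnected_preimage_of_isClosed
    (isConnected_preimage_quot_mk_reebRel_singleton f) hKcl hKconn

theorem stmt6 (f : X → ℝ) (hf : Continuous f)
    (K : Set (Quot (ReebRel f))) (hKcl : IsClosed K) (hKconn : IsConnected K) :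
    IsConnected (Quot.mk (ReebRel f) ⁻¹' K) :=
  stmt6_general f K hKcl hKconn
end
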